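/- arXiv:2311.04840 — 5 statements merged into one kernel-verified Lean document; each statement's English description precedes it below -/
import Mathlib

section
/- Let φ(x,y) = sin x · sin y and v(x,y) = sin²x·(1 − cos y). Then for all (x,y) ∈ (0,π) × (0,π), −(1/2)·(∂²v/∂x² + ∂²v/∂y²) + (1/(2·φ(x,y)))·((∂φ/∂x)·(∂v/∂x) + (∂φ/∂y)·(∂v/∂y)) = v(x,y). -/
open Real Set

/-- With `φ(x,y) = sin x · sin y` and `v(x,y) = sin²x·(1 − cos y)`, the elliptic
equation `−(1/2)Δv + (1/(2φ))⟨∇φ, ∇v⟩ = v` holds on `(0,π) × (0,π)`. -/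
theorem stmt3 :
    let φ : ℝ → ℝ → ℝ := fun x y => Real.sin x * Real.sin y
    let v : ℝ → ℝ → ℝ := fun x y => Real.sin x ^ 2 * (1 - Real.cos y)
    ∀ x ∈ Ioo 0 π, ∀ y ∈ Ioo 0 π,
      -(1 / 2) * (deriv (deriv (fun x' => v x' y)) x + deriv (deriv (fun y' => v x y')) y)
        + (1 / (2 * φ x y)) *
          (deriv (fun x' => φ x' y) x * deriv (fun x' => v x' y) x
            + deriv (fun y' => φ x y') y * deriv (fun y' => v x y') y)
      = v x y := by
  intro φ v x hx y hy
  have hsin_x : sin x ≠ 0 := (sin_pos_of_pos_of_lt_pi hx.1 hx.2).ne'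
  have hsin_y : sin y ≠ 0 := (sin_pos_of_pos_of_lt_pi hy.1 hy.2).ne'
  have v_x : deriv (fun x' => v x' y) x = 2 * sin x * cos x * (1 - cos y) := by simp [v]
  have v_y : deriv (fun y' => v x y') y = sin x ^ 2 * sin y := by simp [v]
  have v_xx : deriv (deriv fun x' => v x' y) x = 2 * (cos x ^ 2 - sin x ^ 2) * (1 - cos y) := by
    simp [v, -mul_eq_mul_right_iff]
    ring
  have v_yy : deriv (deriv fun y' => v x y') y = sin x ^ 2 * cos y := by simp [v]
  have φ_x : deriv (fun x' => φ x' y) x = cos x * sin y := by simp [φ]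
  have φ_y : deriv (fun y' => φ x y') y = sin x * cos y := by simp [φ]
  rw [v_x, v_y, v_xx, v_yy, φ_x, φ_y]
  simp only [φ, v]
  field_simp
  ring
end

section
/- Let p be a real number, φ(x,y) = sin x · sin y, and w(x,y) = (p²/2)·sin²x·(1 − cos y) + sin²y. Then for all (x,y) ∈ (0,π) × (0,π), −(1/2)·(∂²w/∂x² + ∂²w/∂y²) + (1/(2·φ(x,y)))·((∂φ/∂x)·(∂w/∂x) + (∂φ/∂y)·(∂w/∂y)) = w(x,y). -/
/-!
Since `∂ₓφ / φ = cot x` and `∂ᵧφ / φ = cot y`, the operator `L` splits as `ℓₓ + ℓᵧ` with the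
one-variable operator `ℓ f = -(1/2) f'' + (1/2) cot · f'`. This `ℓ` kills constants and `cos`,
and `ℓ (sin²) = sin²` because `(sin²)' = sin 2t`, `(sin²)'' = 2 cos 2t`. Hence `ℓₓ` returns the
first summand `(p²/2) sin²x (1 - cos y)` of `w` and `ℓᵧ` the second one, `sin²y`.
-/

open Real Set

noncomputable def sliceOp (f : ℝ → ℝ) (t : ℝ) : ℝ :=
  -(1 / 2) * deriv (deriv f) t + cos t / (2 * sin t) * deriv f t

noncomputable def orbitOp (u : ℝ → ℝ → ℝ) (x y : ℝ) : ℝ :=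
  -(1 / 2) * (deriv (deriv (fun x' => u x' y)) x + deriv (deriv (fun y' => u x y')) y)
    + (1 / (2 * (sin x * sin y))) *
      (deriv (fun x' => sin x' * sin y) x * deriv (fun x' => u x' y) x
        + deriv (fun y' => sin x * sin y') y * deriv (fun y' => u x y') y)

theorem orbitOp_eq_sliceOp_add_sliceOp (u : ℝ → ℝ → ℝ) {x y : ℝ} (hx : sin x ≠ 0)
    (hy : sin y ≠ 0) :
    orbitOp u x y = sliceOp (fun s => u s y) x + sliceOp (fun s => u x s) y := by
  unfold orbitOp sliceOp
  rw [((hasDerivAt_sin x).mul_const (sin y)).deriv, ((hasDerivAt_sin y).const_mul (sin x)).deriv]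
  field_simp
  ring

theorem hasDerivAt_sin_sq (t : ℝ) : HasDerivAt (fun s => sin s ^ 2) (sin (2 * t)) t :=
  ((hasDerivAt_sin t).pow 2).congr_deriv (by rw [sin_two_mul]; ring)

theorem hasDerivAt_sin_two_mul (t : ℝ) : HasDerivAt (fun s => sin (2 * s)) (2 * cos (2 * t)) t := by
  simpa [mul_comm] using ((hasDerivAt_id t).const_mul 2).sin

theorem sliceOp_mul_sin_sq_add_const (a b : ℝ) {t : ℝ} (ht : sin t ≠ 0) :
    sliceOp (fun s => a * sin s ^ 2 + b) t = a * sin t ^ 2 := by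
  have hd : deriv (fun s => a * sin s ^ 2 + b) = fun s => a * sin (2 * s) :=
    funext fun s => (((hasDerivAt_sin_sq s).const_mul a).add_const b).deriv
  unfold sliceOp
  rw [hd, ((hasDerivAt_sin_two_mul t).const_mul a).deriv]
  beta_reduce
  rw [cos_two_mul, sin_two_mul]
  field_simp
  rw [sin_sq]
  ring

theorem sliceOp_mul_one_sub_cos_add_sin_sq (a : ℝ) {t : ℝ} (ht : sin t ≠ 0) :
    sliceOp (fun s => a * (1 - cos s) + sin s ^ 2) t = sin t ^ 2 := by
  have hd : deriv (fun s => a * (1 - cos s) + sin s ^ 2) = fun s => a * sin s + sin (2 * s) := by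
    funext s
    rw [((((hasDerivAt_cos s).const_sub 1).const_mul a).fun_add (hasDerivAt_sin_sq s)).deriv]
    ring
  unfold sliceOp
  rw [hd, (((hasDerivAt_sin t).const_mul a).fun_add (hasDerivAt_sin_two_mul t)).deriv]
  beta_reduce
  rw [cos_two_mul, sin_two_mul]
  field_simp
  rw [sin_sq]
  ring

/-- With `φ(x,y) = sin x · sin y` and `w(x,y) = (p²/2)·sin²x·(1 − cos y) + sin²y`,
the elliptic equation `−(1/2)Δw + (1/(2φ))⟨∇φ, ∇w⟩ = w` holds on `(0,π) × (0,π)`,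
for every real `p`. -/
theorem stmt4 (p : ℝ) :
    let φ : ℝ → ℝ → ℝ := fun x y => Real.sin x * Real.sin y
    let w : ℝ → ℝ → ℝ := fun x y =>
      (p ^ 2 / 2) * Real.sin x ^ 2 * (1 - Real.cos y) + Real.sin y ^ 2
    ∀ x ∈ Ioo 0 π, ∀ y ∈ Ioo 0 π,
      -(1 / 2) * (deriv (deriv (fun x' => w x' y)) x + deriv (deriv (fun y' => w x y')) y)
        + (1 / (2 * φ x y)) *
          (deriv (fun x' => φ x' y) x * deriv (fun x' => w x' y) x
            + deriv (fun y' => φ x y') y * deriv (fun y' => w x y') y)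
      = w x y := by
  intro φ w x hx y hy
  have hsx : sin x ≠ 0 := (sin_pos_of_pos_of_lt_pi hx.1 hx.2).ne'
  have hsy : sin y ≠ 0 := (sin_pos_of_pos_of_lt_pi hy.1 hy.2).ne'
  have hx_slice : (fun s => w s y) = fun s => (p ^ 2 / 2 * (1 - cos y)) * sin s ^ 2 + sin y ^ 2 :=
    funext fun s => by ring
  change orbitOp w x y = w x y
  rw [orbitOp_eq_sliceOp_add_sliceOp w hsx hsy, hx_slice, sliceOp_mul_sin_sq_add_const _ _ hsx,
    sliceOp_mul_one_sub_cos_add_sin_sq _ hsy]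
  ring
end

section
/- Let λ be a real number and let u : ℝ² → ℝ be continuous on the closed square [0,π] × [0,π], twice continuously differentiable on the open square (0,π) × (0,π), with u(x,y) > 0 for all (x,y) ∈ (0,π) × (0,π), u = 0 on the boundary of [0,π] × [0,π], and Δu = −λ·u on (0,π) × (0,π). Then λ = 2. -/
/-!
Compare `u` with the separable eigenfunctions
`cos (k (x - π/2)) cos (k (y - π/2))` of eigenvalue `2k²`. If `g > 0` on a compact set `K` and
`f` vanishes on `∂K` and is positive somewhere, the maximum of `f / g` over `K` is attained at an
interior point, where `T g - f ≥ 0` touches zero; the Laplacian of `T g - f` is nonnegative there,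
which forces the eigenvalue of `g` to be at most that of `f`. For `k < 1` the mode is positive
on the closed square and serves as `g`, with `f = u`, giving `2k² ≤ λ`; for `k > 1` it vanishes
on the boundary of the concentric square of side `π / k` and serves as `f`, with `g = u`, giving
`λ ≤ 2k²`. Letting `k → 1` gives `λ = 2`.
-/

open Real Set

/-- First coordinate partial derivative of a function on `ℝ²`. -/
noncomputable def pdX (f : ℝ × ℝ → ℝ) (p : ℝ × ℝ) : ℝ := deriv (fun t => f (t, p.2)) p.1

/-- Second coordinate partial derivative of a function on `ℝ²`. -/
noncomputable def pdY (f : ℝ × ℝ → ℝ) (p : ℝ × ℝ) : ℝ := deriv (fun t => f (p.1, t)) p.2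

/-- Euclidean Laplacian on `ℝ²` via coordinate partial derivatives. -/
noncomputable def lap (f : ℝ × ℝ → ℝ) (p : ℝ × ℝ) : ℝ := pdX (pdX f) p + pdY (pdY f) p

open Filter Topology

theorem IsLocalMin.deriv_deriv_nonneg {f : ℝ → ℝ} {x₀ : ℝ} (hmin : IsLocalMin f x₀)
    (hc : ContinuousAt f x₀) : 0 ≤ deriv (deriv f) x₀ := by
  by_contra! hneg
  have hsign : ∀ᶠ x in 𝓝[≠] x₀, SignType.sign (deriv f x) = SignType.sign (x₀ - x) :=
    nhdsWithin_le_nhds (eventually_nhdsWithin_sign_eq_of_deriv_neg hneg hmin.deriv_eq_zero)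
  -- By the second derivative test `x₀` is also a local maximum, so `f` is locally constant.
  have hconst : f =ᶠ[𝓝 x₀] fun _ => f x₀ := by
    filter_upwards [hmin, isLocalMax_of_sign_deriv hc hsign] with x h₁ h₂
    exact le_antisymm h₂ h₁
  obtain ⟨x, hx_neg, hx_zero⟩ :=
    ((deriv_neg_right_of_sign_deriv hsign).and (nhdsWithin_le_nhds hconst.deriv)).exists
  rw [deriv_const] at hx_zero
  exact hx_neg.ne hx_zero

theorem IsLocalMin.lap_nonneg {f : ℝ × ℝ → ℝ} {p : ℝ × ℝ} (hmin : IsLocalMin f p)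
    (hc : ContinuousAt f p) : 0 ≤ lap f p :=
  add_nonneg
    ((hmin.comp_continuous (g := fun t => (t, p.2)) (by fun_prop)).deriv_deriv_nonneg
      (hc.comp (g := f) (f := fun t => (t, p.2)) (by fun_prop)))
    ((hmin.comp_continuous (g := fun t => (p.1, t)) (by fun_prop)).deriv_deriv_nonneg
      (hc.comp (g := f) (f := fun t => (p.1, t)) (by fun_prop)))

theorem pdX_pdX_eq_iteratedDeriv (f : ℝ × ℝ → ℝ) (p : ℝ × ℝ) :
    pdX (pdX f) p = iteratedDeriv 2 (fun t => f (t, p.2)) p.1 := by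
  rw [iteratedDeriv_succ, iteratedDeriv_one]
  rfl

theorem pdY_pdY_eq_iteratedDeriv (f : ℝ × ℝ → ℝ) (p : ℝ × ℝ) :
    pdY (pdY f) p = iteratedDeriv 2 (fun t => f (p.1, t)) p.2 := by
  rw [iteratedDeriv_succ, iteratedDeriv_one]
  rfl

theorem lap_sub {f g : ℝ × ℝ → ℝ} {p : ℝ × ℝ} (hf : ContDiffAt ℝ 2 f p)
    (hg : ContDiffAt ℝ 2 g p) : lap (f - g) p = lap f p - lap g p := by
  have hX {h : ℝ × ℝ → ℝ} (hh : ContDiffAt ℝ 2 h p) :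
      ContDiffAt ℝ 2 (fun t => h (t, p.2)) p.1 :=
    hh.comp p.1 (by fun_prop)
  have hY {h : ℝ × ℝ → ℝ} (hh : ContDiffAt ℝ 2 h p) :
      ContDiffAt ℝ 2 (fun t => h (p.1, t)) p.2 :=
    hh.comp p.2 (by fun_prop)
  simp only [lap, pdX_pdX_eq_iteratedDeriv, pdY_pdY_eq_iteratedDeriv, Pi.sub_apply,
    iteratedDeriv_fun_sub (hX hf) (hX hg), iteratedDeriv_fun_sub (hY hf) (hY hg)]
  ring

theorem lap_const_mul (c : ℝ) (f : ℝ × ℝ → ℝ) (p : ℝ × ℝ) :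
    lap (fun q => c * f q) p = c * lap f p := by
  simp only [lap, pdX, pdY, deriv_const_mul_field', mul_add]

theorem lap_le_of_eventuallyLE {f g : ℝ × ℝ → ℝ} {p : ℝ × ℝ} (hle : f ≤ᶠ[𝓝 p] g)
    (heq : f p = g p) (hf : ContDiffAt ℝ 2 f p) (hg : ContDiffAt ℝ 2 g p) :
    lap f p ≤ lap g p := by
  have hmin : IsLocalMin (g - f) p := by
    filter_upwards [hle] with q hq
    simp only [Pi.sub_apply, heq, sub_self]
    linarith
  have := hmin.lap_nonneg (hg.continuousAt.sub hf.continuousAt)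
  rw [lap_sub hg hf] at this
  linarith

theorem IsCompact.exists_mem_interior_touching {E : Type*} [TopologicalSpace E]
    {K : Set E} (hK : IsCompact K) {f g : E → ℝ} (hf : ContinuousOn f K)
    (hg : ContinuousOn g K) (hg_pos : ∀ p ∈ K, 0 < g p)
    (hf_frontier : ∀ p ∈ frontier K, f p = 0) {c : E} (hc : c ∈ K) (hfc : 0 < f c) :
    ∃ p ∈ interior K, ∃ T : ℝ, (∀ q ∈ K, f q ≤ T * g q) ∧ f p = T * g p ∧ 0 < f p := by
  obtain ⟨p, hpK, hmax⟩ := hK.exists_isMaxOn ⟨c, hc⟩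
    (hf.div hg fun q hq => (hg_pos q hq).ne')
  have hratio (q) (hq : q ∈ K) : f q = f q / g q * g q :=
    (div_mul_cancel₀ _ (hg_pos q hq).ne').symm
  have hfp : 0 < f p :=
    (div_pos_iff_of_pos_right (hg_pos p hpK)).mp
      ((div_pos hfc (hg_pos c hc)).trans_le (hmax hc))
  have hp_int : p ∈ interior K := by
    by_contra hp
    exact hfp.ne' (hf_frontier p ⟨subset_closure hpK, hp⟩)
  refine ⟨p, hp_int, f p / g p, fun q hq => ?_, hratio p hpK, hfp⟩
  rw [hratio q hq]
  exact mul_le_mul_of_nonneg_right (hmax hq) (hg_pos q hq).le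

theorem eigenvalue_le_of_frontier_eq_zero {K : Set (ℝ × ℝ)} (hK : IsCompact K)
    {f g : ℝ × ℝ → ℝ} {α β : ℝ} (hf : ContinuousOn f K) (hg : ContinuousOn g K)
    (hg_pos : ∀ p ∈ K, 0 < g p) (hf_frontier : ∀ p ∈ frontier K, f p = 0)
    {c : ℝ × ℝ} (hc : c ∈ K) (hfc : 0 < f c)
    (hf_reg : ∀ p ∈ interior K, ContDiffAt ℝ 2 f p)
    (hg_reg : ∀ p ∈ interior K, ContDiffAt ℝ 2 g p)
    (hf_eq : ∀ p ∈ interior K, lap f p = -α * f p)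
    (hg_eq : ∀ p ∈ interior K, lap g p = -β * g p) :
    β ≤ α := by
  obtain ⟨p, hp, T, hle, heq, hfp⟩ :=
    hK.exists_mem_interior_touching hf hg hg_pos hf_frontier hc hfc
  have hlap : lap f p ≤ lap (fun q => T * g q) p :=
    lap_le_of_eventuallyLE (mem_of_superset (mem_interior_iff_mem_nhds.mp hp) hle) heq
      (hf_reg p hp) (contDiffAt_const.mul (hg_reg p hp))
  rw [lap_const_mul, hf_eq p hp, hg_eq p hp, heq] at hlap
  nlinarith

noncomputable def cosMode (k : ℝ) (p : ℝ × ℝ) : ℝ :=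
  cos (k * (p.1 - π / 2)) * cos (k * (p.2 - π / 2))

theorem contDiff_cosMode (k : ℝ) : ContDiff ℝ 2 (cosMode k) := by
  unfold cosMode
  fun_prop

theorem cosMode_center (k : ℝ) : cosMode k (π / 2, π / 2) = 1 := by
  simp [cosMode]

theorem deriv_deriv_cos_mul_sub (k c x : ℝ) :
    deriv (deriv fun t => cos (k * (t - c))) x = -k ^ 2 * cos (k * (x - c)) := by
  have hlin (t : ℝ) : HasDerivAt (fun t => k * (t - c)) k t := by
    simpa using ((hasDerivAt_id t).sub_const c).const_mul k
  have hcos : deriv (fun t => cos (k * (t - c))) = fun t => -k * sin (k * (t - c)) := by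
    funext t
    simpa [mul_comm] using (hlin t).cos.deriv
  rw [hcos, deriv_const_mul_field']
  simp only [(hlin x).sin.deriv]
  ring

theorem lap_cosMode (k : ℝ) (p : ℝ × ℝ) :
    lap (cosMode k) p = -(2 * k ^ 2) * cosMode k p := by
  simp only [lap, pdX, pdY, cosMode, deriv_mul_const_field', deriv_const_mul_field',
    deriv_deriv_cos_mul_sub]
  ring

theorem center_mem_square : (π / 2, π / 2) ∈ Ioo 0 π ×ˢ Ioo 0 π := by
  have := pi_pos
  constructor <;> constructor <;> linarith

theorem two_mul_sq_le_of_lt_one {u : ℝ × ℝ → ℝ} {lam : ℝ}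
    (hcont : ContinuousOn u (Icc 0 π ×ˢ Icc 0 π))
    (hreg : ContDiffOn ℝ 2 u (Ioo 0 π ×ˢ Ioo 0 π))
    (hpos : ∀ p ∈ Ioo 0 π ×ˢ Ioo 0 π, 0 < u p)
    (hbdry : ∀ p ∈ frontier (Icc 0 π ×ˢ Icc 0 π), u p = 0)
    (heq : ∀ p ∈ Ioo 0 π ×ˢ Ioo 0 π, lap u p = -lam * u p)
    {k : ℝ} (hk₀ : 0 < k) (hk₁ : k < 1) : 2 * k ^ 2 ≤ lam := by
  have hint : interior (Icc 0 π ×ˢ Icc 0 π) = Ioo 0 π ×ˢ Ioo 0 π := by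
    rw [interior_prod_eq, interior_Icc]
  have hcos (x : ℝ) (hx : x ∈ Icc 0 π) : 0 < cos (k * (x - π / 2)) := by
    have := pi_pos
    apply cos_pos_of_mem_Ioo
    constructor <;> nlinarith [hx.1, hx.2]
  refine eigenvalue_le_of_frontier_eq_zero (isCompact_Icc.prod isCompact_Icc) hcont
    (contDiff_cosMode k).continuous.continuousOn
    (fun p hp => mul_pos (hcos _ hp.1) (hcos _ hp.2))
    hbdry (prod_mono Ioo_subset_Icc_self Ioo_subset_Icc_self center_mem_square)
    (hpos _ center_mem_square) ?_ (fun p _ => (contDiff_cosMode k).contDiffAt) ?_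
    (fun p _ => lap_cosMode k p) <;> rw [hint]
  · exact fun p hp => hreg.contDiffAt ((isOpen_Ioo.prod isOpen_Ioo).mem_nhds hp)
  · exact heq

theorem le_two_mul_sq_of_one_lt {u : ℝ × ℝ → ℝ} {lam : ℝ}
    (hcont : ContinuousOn u (Icc 0 π ×ˢ Icc 0 π))
    (hreg : ContDiffOn ℝ 2 u (Ioo 0 π ×ˢ Ioo 0 π))
    (hpos : ∀ p ∈ Ioo 0 π ×ˢ Ioo 0 π, 0 < u p)
    (heq : ∀ p ∈ Ioo 0 π ×ˢ Ioo 0 π, lap u p = -lam * u p)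
    {k : ℝ} (hk : 1 < k) : lam ≤ 2 * k ^ 2 := by
  have hπ := pi_pos
  set r := π / (2 * k)
  have hr₀ : 0 < r := div_pos hπ (by linarith)
  have hkr : k * r = π / 2 := by simp only [r]; field_simp
  have hr : r < π / 2 := by nlinarith
  set I := Icc (π / 2 - r) (π / 2 + r)
  have hK : I ×ˢ I ⊆ Ioo 0 π ×ˢ Ioo 0 π := by
    have hI : I ⊆ Ioo 0 π := fun x hx => ⟨by linarith [hx.1], by linarith [hx.2]⟩
    exact prod_mono hI hI
  have hcos (x : ℝ) (hx : x ∈ frontier I) : cos (k * (x - π / 2)) = 0 := by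
    rw [frontier_Icc (by linarith)] at hx
    rcases hx with rfl | rfl
    · rw [show k * (π / 2 - r - π / 2) = -(π / 2) by linarith, cos_neg, cos_pi_div_two]
    · rw [show k * (π / 2 + r - π / 2) = π / 2 by linarith, cos_pi_div_two]
  have hvanish (p) (hp : p ∈ frontier (I ×ˢ I)) : cosMode k p = 0 := by
    rw [frontier_prod_eq] at hp
    rcases hp with ⟨-, hp⟩ | ⟨hp, -⟩ <;> simp [cosMode, hcos _ hp]
  have hreg' (p) (hp : p ∈ interior (I ×ˢ I)) : ContDiffAt ℝ 2 u p :=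
    hreg.contDiffAt ((isOpen_Ioo.prod isOpen_Ioo).mem_nhds (hK (interior_subset hp)))
  exact eigenvalue_le_of_frontier_eq_zero (isCompact_Icc.prod isCompact_Icc)
    (contDiff_cosMode k).continuous.continuousOn
    (hcont.mono (hK.trans (prod_mono Ioo_subset_Icc_self Ioo_subset_Icc_self)))
    (fun p hp => hpos p (hK hp)) hvanish (c := (π / 2, π / 2))
    ⟨⟨by linarith, by linarith⟩, by linarith, by linarith⟩ (by rw [cosMode_center]; exact one_pos)
    (fun p _ => (contDiff_cosMode k).contDiffAt) hreg' (fun p _ => lap_cosMode k p)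
    (fun p hp => heq p (hK (interior_subset hp)))

/-- A positive Dirichlet eigenfunction of the Euclidean Laplacian on the square
`[0,π] × [0,π]` has eigenvalue `λ = 2` (the principal Dirichlet eigenvalue). -/
theorem stmt6 (lam : ℝ) (u : ℝ × ℝ → ℝ)
    (hcont : ContinuousOn u (Icc (0:ℝ) π ×ˢ Icc (0:ℝ) π))
    (hreg : ContDiffOn ℝ 2 u (Ioo (0:ℝ) π ×ˢ Ioo (0:ℝ) π))
    (hpos : ∀ p ∈ Ioo (0:ℝ) π ×ˢ Ioo (0:ℝ) π, 0 < u p)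
    (hbdry : ∀ p ∈ frontier (Icc (0:ℝ) π ×ˢ Icc (0:ℝ) π), u p = 0)
    (heq : ∀ p ∈ Ioo (0:ℝ) π ×ˢ Ioo (0:ℝ) π, lap u p = -lam * u p) :
    lam = 2 := by
  have hlim : Tendsto (fun k : ℝ => 2 * k ^ 2) (𝓝 1) (𝓝 2) := by
    simpa using (by fun_prop : Continuous fun k : ℝ => 2 * k ^ 2).tendsto 1
  apply le_antisymm
  · exact ge_of_tendsto (hlim.mono_left nhdsWithin_le_nhds)
      (eventually_nhdsWithin_of_forall fun k hk =>
        le_two_mul_sq_of_one_lt hcont hreg hpos heq (mem_Ioi.mp hk))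
  · exact le_of_tendsto (hlim.mono_left nhdsWithin_le_nhds)
      (mem_of_superset (Ioo_mem_nhdsLT one_pos) fun k hk =>
        two_mul_sq_le_of_lt_one hcont hreg hpos hbdry heq hk.1 hk.2)
end

section
/- Let Ω ⊆ ℝ² be a nonempty bounded open connected set, let a : Ω → ℝ be continuous with a(x) > 0 for all x ∈ Ω, and let c : Ω → ℝ² be continuous. Suppose w : ℝ² → ℝ is continuous on the closure of Ω, twice continuously differentiable on Ω, w = 0 on the frontier of Ω, and a(x)·Δw(x) + ⟨c(x), ∇w(x)⟩ = 0 for all x ∈ Ω. Then w = 0 on the closure of Ω. -/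
/-!
If `w` had a positive maximum `M` on `closure Ω`, the superlevel set `K = {w ≥ M/2}` would be a
compact subset of `Ω`, on which `|c₁| < α a` for some `α`. Then `v = w + ε exp (α x)`, with `ε`
so small that `v` still peaks where `w > M/2`, has an interior local maximum `q`; there
`∂ₓw = -εα e^{αx}`, `∂ₓ²w ≤ -εα² e^{αx}`, `∂_y w = 0`, `∂_y² w ≤ 0`, which forces
`a Δw + ⟨c, ∇w⟩ < 0` at `q`. Hence `w ≤ 0`, and applying this to `-w` gives `w = 0`.
-/

open Real Set

open Filter Topology

theorem IsLocalMax.deriv_deriv_nonpos {f : ℝ → ℝ} {x : ℝ} (hmax : IsLocalMax f x)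
    (hf : ContinuousAt f x) : deriv (deriv f) x ≤ 0 := by
  by_contra! hpos
  -- the second-derivative test makes `x` a local minimum too, so `f` is constant near `x`
  have hmin : IsLocalMin f x := isLocalMin_of_deriv_deriv_pos hpos hmax.deriv_eq_zero hf
  have hconst : f =ᶠ[𝓝 x] fun _ => f x := by
    filter_upwards [hmax, hmin] with y hy₁ hy₂ using le_antisymm hy₁ hy₂
  refine hpos.ne' ?_
  rw [hconst.deriv.deriv_eq]
  simp

theorem IsLocalMax.deriv_eq_and_deriv_deriv_le_of_add {f g : ℝ → ℝ} {x : ℝ}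
    (hmax : IsLocalMax (fun t => f t + g t) x) (hf : ContDiffAt ℝ 2 f x)
    (hg : ContDiffAt ℝ 2 g x) :
    deriv f x = -deriv g x ∧ deriv (deriv f) x ≤ -deriv (deriv g) x := by
  have h₁ := iteratedDeriv_fun_add (hf.of_le one_le_two) (hg.of_le one_le_two)
  have h₂ := iteratedDeriv_fun_add hf hg
  simp only [iteratedDeriv_one, iteratedDeriv_succ, iteratedDeriv_zero] at h₁ h₂
  constructor
  · linarith [hmax.deriv_eq_zero]
  · linarith [hmax.deriv_deriv_nonpos (hf.continuousAt.add hg.continuousAt)]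

theorem IsCompact.exists_pos_forall_lt {X : Type*} [TopologicalSpace X] {K : Set X}
    (hK : IsCompact K) {f : X → ℝ} (hf : ContinuousOn f K) : ∃ b > 0, ∀ x ∈ K, f x < b := by
  obtain ⟨B, hB⟩ := hK.bddAbove_image hf
  exact ⟨max B 0 + 1, by positivity, fun x hx =>
    (le_max_of_le_left (hB (mem_image_of_mem f hx))).trans_lt (lt_add_one _)⟩

theorem pdX_neg (f : ℝ × ℝ → ℝ) : pdX (fun p => -f p) = fun p => -pdX f p :=
  funext fun _ => deriv.neg

theorem pdY_neg (f : ℝ × ℝ → ℝ) : pdY (fun p => -f p) = fun p => -pdY f p :=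
  funext fun _ => deriv.neg

theorem lap_neg (f : ℝ × ℝ → ℝ) (p : ℝ × ℝ) : lap (fun p => -f p) p = -lap f p := by
  simp only [lap, pdX_neg, pdY_neg]
  ring

theorem elliptic_lt_zero_of_isLocalMax_add_exp {w : ℝ × ℝ → ℝ} {q : ℝ × ℝ}
    {a c₁ c₂ α ε : ℝ} (hw : ContDiffAt ℝ 2 w q)
    (hmax : IsLocalMax (fun p => w p + ε * exp (α * p.1)) q)
    (ha : 0 < a) (hc : |c₁| < a * α) (hε : 0 < ε) :
    a * lap w q + (c₁ * pdX w q + c₂ * pdY w q) < 0 := by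
  have hexp : deriv (fun t => exp (α * t)) = fun t => α * exp (α * t) := by
    simpa using iteratedDeriv_exp_const_mul 1 α
  have hX : pdX w q = -(ε * (α * exp (α * q.1))) ∧
      pdX (pdX w) q ≤ -(ε * (α * (α * exp (α * q.1)))) := by
    have h := IsLocalMax.deriv_eq_and_deriv_deriv_le_of_add (g := fun t => ε * exp (α * t))
        (hmax.comp_continuous (g := fun t => (t, q.2)) (b := q.1) (by fun_prop))
        (hw.comp q.1 (by fun_prop)) (by fun_prop)
    simp only [deriv_const_mul_field', hexp] at h
    exact h
  have hY : pdY w q = 0 ∧ pdY (pdY w) q ≤ 0 := by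
    have h := IsLocalMax.deriv_eq_and_deriv_deriv_le_of_add (g := fun _ => ε * exp (α * q.1))
        (hmax.comp_continuous (g := fun t => (q.1, t)) (b := q.2) (by fun_prop))
        (hw.comp q.2 (by fun_prop)) contDiffAt_const
    simp only [deriv_const', deriv_const, neg_zero] at h
    exact h
  have hα : 0 < α := pos_of_mul_pos_right ((abs_nonneg c₁).trans_lt hc) ha.le
  have hcα : 0 < a * α + c₁ := by linarith [neg_abs_le c₁]
  have he := exp_pos (α * q.1)
  calc a * lap w q + (c₁ * pdX w q + c₂ * pdY w q)
      ≤ a * (-(ε * (α * (α * exp (α * q.1))))) + c₁ * -(ε * (α * exp (α * q.1))) := by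
        rw [lap, hX.1, hY.1]
        linarith [mul_le_mul_of_nonneg_left hX.2 ha.le, mul_le_mul_of_nonneg_left hY.2 ha.le]
    _ = -(ε * α * exp (α * q.1) * (a * α + c₁)) := by ring
    _ < 0 := by
      have := mul_pos (mul_pos (mul_pos hε hα) he) hcα
      linarith

theorem closure_inter_preimage_Ici_subset {Ω : Set (ℝ × ℝ)} (hopen : IsOpen Ω)
    {w : ℝ × ℝ → ℝ} (hw_bdry : ∀ p ∈ frontier Ω, w p ≤ 0) {t : ℝ} (ht : 0 < t) :
    closure Ω ∩ w ⁻¹' Ici t ⊆ Ω := fun x ⟨hxc, hxt⟩ => by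
  by_contra hxΩ
  have := hw_bdry x ⟨hxc, by rwa [hopen.interior_eq]⟩
  have hxt : t ≤ w x := hxt
  linarith

theorem nonpos_of_elliptic_subsolution {Ω : Set (ℝ × ℝ)} (hopen : IsOpen Ω)
    (hbd : Bornology.IsBounded Ω) {a : ℝ × ℝ → ℝ} (ha_cont : ContinuousOn a Ω)
    (ha_pos : ∀ p ∈ Ω, 0 < a p) {c : ℝ × ℝ → ℝ × ℝ} (hc_cont : ContinuousOn c Ω)
    {w : ℝ × ℝ → ℝ} (hw_cont : ContinuousOn w (closure Ω)) (hw_reg : ContDiffOn ℝ 2 w Ω)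
    (hw_bdry : ∀ p ∈ frontier Ω, w p ≤ 0)
    (hsub : ∀ p ∈ Ω, 0 ≤ a p * lap w p + ((c p).1 * pdX w p + (c p).2 * pdY w p)) :
    ∀ p ∈ closure Ω, w p ≤ 0 := by
  by_contra! ⟨p₁, hp₁, hwp₁⟩
  have hcpt : IsCompact (closure Ω) := hbd.isCompact_closure
  obtain ⟨p₀, hp₀, hmax₀⟩ := hcpt.exists_isMaxOn ⟨p₁, hp₁⟩ hw_cont
  set M := w p₀
  have hM : 0 < M := hwp₁.trans_le (hmax₀ hp₁)
  -- the superlevel set `K` stays away from the boundary, where `a` and `c` may degenerate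
  set K := closure Ω ∩ w ⁻¹' Ici (M / 2)
  have hKcpt : IsCompact K := hcpt.of_isClosed_subset
    (hw_cont.preimage_isClosed_of_isClosed isClosed_closure isClosed_Ici) inter_subset_left
  have hKΩ : K ⊆ Ω := closure_inter_preimage_Ici_subset hopen hw_bdry (by positivity)
  have hp₀K : p₀ ∈ K := ⟨hp₀, by simp only [mem_preimage, mem_Ici]; linarith⟩
  obtain ⟨α, -, hα⟩ := hKcpt.exists_pos_forall_lt (f := fun x => |(c x).1| / a x)
    ((hc_cont.fst.abs.div ha_cont fun x hx => (ha_pos x hx).ne').mono hKΩ)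
  obtain ⟨E, hE, hexp⟩ := hKcpt.exists_pos_forall_lt (f := fun x => exp (α * x.1))
    (by fun_prop)
  set ε := M / (4 * E)
  have hε : 0 < ε := by positivity
  set v := fun x : ℝ × ℝ => w x + ε * exp (α * x.1)
  obtain ⟨q, hqK, hqmax⟩ := hKcpt.exists_isMaxOn (f := v) ⟨p₀, hp₀K⟩
    ((hw_cont.mono inter_subset_left).add (Continuous.continuousOn (by fun_prop)))
  have hwq : M / 2 < w q := by
    by_contra! hwq
    have h₁ : v p₀ ≤ v q := hqmax hp₀K
    have h₂ : ε * exp (α * q.1) < M / 4 := by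
      calc ε * exp (α * q.1) < ε * E := by gcongr; exact hexp q hqK
        _ = M / 4 := by simp only [ε]; field_simp
    have h₃ : 0 < ε * exp (α * p₀.1) := by positivity
    simp only [v] at h₁
    linarith
  have hqΩ : q ∈ Ω := hKΩ hqK
  have hloc : IsLocalMax v q := by
    have hU : IsOpen (Ω ∩ w ⁻¹' Ioi (M / 2)) :=
      hw_reg.continuousOn.isOpen_inter_preimage hopen isOpen_Ioi
    filter_upwards [hU.mem_nhds ⟨hqΩ, hwq⟩] with x hx
    exact hqmax ⟨subset_closure hx.1, (show M / 2 < w x from hx.2).le⟩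
  have hcq : |(c q).1| < a q * α := by
    have := hα q hqK
    rwa [div_lt_iff₀ (ha_pos q hqΩ), mul_comm] at this
  exact (elliptic_lt_zero_of_isLocalMax_add_exp (hw_reg.contDiffAt (hopen.mem_nhds hqΩ)) hloc
    (ha_pos q hqΩ) hcq hε).not_ge (hsub q hqΩ)

theorem stmt10_general (Ω : Set (ℝ × ℝ)) (hopen : IsOpen Ω)
    (hbd : Bornology.IsBounded Ω)
    (a : ℝ × ℝ → ℝ) (ha_cont : ContinuousOn a Ω) (ha_pos : ∀ p ∈ Ω, 0 < a p)
    (c : ℝ × ℝ → ℝ × ℝ) (hc_cont : ContinuousOn c Ω)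
    (w : ℝ × ℝ → ℝ)
    (hw_cont : ContinuousOn w (closure Ω))
    (hw_reg : ContDiffOn ℝ 2 w Ω)
    (hw_bdry : ∀ p ∈ frontier Ω, w p = 0)
    (heq : ∀ p ∈ Ω, a p * lap w p + ((c p).1 * pdX w p + (c p).2 * pdY w p) = 0) :
    ∀ p ∈ closure Ω, w p = 0 := by
  have hle := nonpos_of_elliptic_subsolution hopen hbd ha_cont ha_pos hc_cont hw_cont hw_reg
    (fun p hp => (hw_bdry p hp).le) fun p hp => (heq p hp).ge
  have hge := nonpos_of_elliptic_subsolution (w := fun p => -w p) hopen hbd ha_cont ha_pos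
    hc_cont hw_cont.neg hw_reg.neg (fun p hp => by simp [hw_bdry p hp]) fun p hp => by
      simp only [lap_neg, pdX_neg, pdY_neg]
      linarith [heq p hp]
  intro p hp
  linarith [hle p hp, hge p hp]

/-- Maximum principle for `a·Δw + ⟨c, ∇w⟩ = 0` with no zeroth-order term: a solution
continuous up to the boundary of a nonempty bounded open connected `Ω ⊆ ℝ²` which
vanishes on the boundary vanishes identically on the closure of `Ω`. -/
theorem stmt10 (Ω : Set (ℝ × ℝ)) (hopen : IsOpen Ω) (hconn : IsConnected Ω)
    (hbd : Bornology.IsBounded Ω)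
    (a : ℝ × ℝ → ℝ) (ha_cont : ContinuousOn a Ω) (ha_pos : ∀ p ∈ Ω, 0 < a p)
    (c : ℝ × ℝ → ℝ × ℝ) (hc_cont : ContinuousOn c Ω)
    (w : ℝ × ℝ → ℝ)
    (hw_cont : ContinuousOn w (closure Ω))
    (hw_reg : ContDiffOn ℝ 2 w Ω)
    (hw_bdry : ∀ p ∈ frontier Ω, w p = 0)
    (heq : ∀ p ∈ Ω, a p * lap w p + ((c p).1 * pdX w p + (c p).2 * pdY w p) = 0) :
    ∀ p ∈ closure Ω, w p = 0 :=
  stmt10_general Ω hopen hbd a ha_cont ha_pos c hc_cont w hw_cont hw_reg hw_bdry heq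
end

section
/- Let U ⊆ ℝ² be open and let G : U → Matrix (Fin 2) (Fin 2) ℝ be a smooth map such that G(x) is symmetric and positive definite for every x ∈ U. Define φ : U → ℝ by φ = √(det G). Then at every point of U: Σᵢⱼ (G⁻¹)ᵢⱼ · ΔGᵢⱼ = 2·φ⁻¹·Δφ − 2·φ⁻²·‖∇φ‖² + Σᵢⱼₖₗ (G⁻¹)ᵢₖ·(G⁻¹)ⱼₗ·⟨∇Gᵢⱼ, ∇Gₖₗ⟩, where Δ denotes the Euclidean Laplacian and ∇ the Euclidean gradient applied to each real-valued entry function, ‖·‖ the Euclidean norm, and ⟨·,·⟩ the Euclidean inner product on ℝ². -/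
open Real Set Matrix

/-- Euclidean inner product of the gradients of two functions on `ℝ²`. -/
noncomputable def gradInner (f g : ℝ × ℝ → ℝ) (p : ℝ × ℝ) : ℝ :=
  pdX f p * pdX g p + pdY f p * pdY g p


open Real Set Matrix

section helpers

variable {s : Set ℝ} {x : ℝ}

lemma myDiffAt (hs : IsOpen s) {f : ℝ → ℝ} (hf : ContDiffOn ℝ 2 f s) (hx : x ∈ s) :
    DifferentiableAt ℝ f x :=
  (hf.contDiffAt (hs.mem_nhds hx)).differentiableAt (by norm_num)

lemma myDiffAt' (hs : IsOpen s) {f : ℝ → ℝ} (hf : ContDiffOn ℝ 2 f s) (hx : x ∈ s) :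
    DifferentiableAt ℝ (deriv f) x :=
  ((hf.deriv_of_isOpen (m := 1) hs (by norm_num)).contDiffAt (hs.mem_nhds hx)).differentiableAt
    (by norm_num)

lemma sqrt_deriv1' (hs : IsOpen s) {D : ℝ → ℝ} (hD : ContDiffOn ℝ 2 D s)
    (hpos : ∀ t ∈ s, 0 < D t) (hx : x ∈ s) :
    deriv (fun t => Real.sqrt (D t)) x = deriv D x / (2 * Real.sqrt (D x)) :=
  (((myDiffAt hs hD hx).hasDerivAt).sqrt (hpos x hx).ne').deriv

lemma sqrt_deriv1 (hs : IsOpen s) {D : ℝ → ℝ} (hD : ContDiffOn ℝ 2 D s)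
    (hpos : ∀ t ∈ s, 0 < D t) (hx : x ∈ s) {r : ℝ} (hr : 0 < r) (hrD : D x = r ^ 2) :
    deriv (fun t => Real.sqrt (D t)) x = deriv D x / (2 * r) := by
  rw [sqrt_deriv1' hs hD hpos hx, hrD, Real.sqrt_sq hr.le]

lemma sqrt_deriv2 (hs : IsOpen s) {D : ℝ → ℝ} (hD : ContDiffOn ℝ 2 D s)
    (hpos : ∀ t ∈ s, 0 < D t) (hx : x ∈ s) {r : ℝ} (hr : 0 < r) (hrD : D x = r ^ 2) :
    deriv (deriv (fun t => Real.sqrt (D t))) x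
      = deriv (deriv D) x / (2 * r) - (deriv D x) ^ 2 / (4 * r ^ 3) := by
  have hne : Real.sqrt (D x) ≠ 0 := (Real.sqrt_pos.2 (hpos x hx)).ne'
  have hEq : (deriv (fun t => Real.sqrt (D t))) =ᶠ[nhds x]
      fun t => deriv D t / (2 * Real.sqrt (D t)) :=
    Filter.eventuallyEq_of_mem (hs.mem_nhds hx) fun t ht => sqrt_deriv1' hs hD hpos ht
  rw [hEq.deriv_eq]
  have h1 : HasDerivAt (fun t => 2 * Real.sqrt (D t))
      (2 * (deriv D x / (2 * Real.sqrt (D x)))) x :=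
    (((myDiffAt hs hD hx).hasDerivAt).sqrt (hpos x hx).ne').const_mul 2
  have h2 : HasDerivAt (deriv D) (deriv (deriv D) x) x := (myDiffAt' hs hD hx).hasDerivAt
  have h3 : deriv (fun t => deriv D t / (2 * Real.sqrt (D t))) x = _ :=
    (h2.div h1 (by simpa using hne)).deriv
  rw [h3, hrD, Real.sqrt_sq hr.le]
  have : r ≠ 0 := hr.ne'
  field_simp
  ring

lemma prod_deriv1 (hs : IsOpen s) {A B1 B2 C : ℝ → ℝ}
    (hA : ContDiffOn ℝ 2 A s) (hB1 : ContDiffOn ℝ 2 B1 s)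
    (hB2 : ContDiffOn ℝ 2 B2 s) (hC : ContDiffOn ℝ 2 C s) (hx : x ∈ s) :
    deriv (fun t => A t * C t - B1 t * B2 t) x
      = deriv A x * C x + A x * deriv C x - (deriv B1 x * B2 x + B1 x * deriv B2 x) :=
  ((((myDiffAt hs hA hx).hasDerivAt).mul ((myDiffAt hs hC hx).hasDerivAt)).sub
    (((myDiffAt hs hB1 hx).hasDerivAt).mul ((myDiffAt hs hB2 hx).hasDerivAt))).deriv

lemma prod_deriv2 (hs : IsOpen s) {A B1 B2 C : ℝ → ℝ}
    (hA : ContDiffOn ℝ 2 A s) (hB1 : ContDiffOn ℝ 2 B1 s)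
    (hB2 : ContDiffOn ℝ 2 B2 s) (hC : ContDiffOn ℝ 2 C s) (hx : x ∈ s) :
    deriv (deriv (fun t => A t * C t - B1 t * B2 t)) x
      = deriv (deriv A) x * C x + 2 * deriv A x * deriv C x + A x * deriv (deriv C) x
        - (deriv (deriv B1) x * B2 x + 2 * deriv B1 x * deriv B2 x
            + B1 x * deriv (deriv B2) x) := by
  have hEq : (deriv (fun t => A t * C t - B1 t * B2 t)) =ᶠ[nhds x]
      fun t => deriv A t * C t + A t * deriv C t - (deriv B1 t * B2 t + B1 t * deriv B2 t) :=
    Filter.eventuallyEq_of_mem (hs.mem_nhds hx) fun t ht => prod_deriv1 hs hA hB1 hB2 hC ht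
  rw [hEq.deriv_eq]
  have h : deriv (fun t => deriv A t * C t + A t * deriv C t
      - (deriv B1 t * B2 t + B1 t * deriv B2 t)) x = _ := ((((myDiffAt' hs hA hx).hasDerivAt.mul (myDiffAt hs hC hx).hasDerivAt).add
      ((myDiffAt hs hA hx).hasDerivAt.mul (myDiffAt' hs hC hx).hasDerivAt)).sub
      (((myDiffAt' hs hB1 hx).hasDerivAt.mul (myDiffAt hs hB2 hx).hasDerivAt).add
      ((myDiffAt hs hB1 hx).hasDerivAt.mul (myDiffAt' hs hB2 hx).hasDerivAt))).deriv
  rw [h]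
  ring

end helpers

set_option maxHeartbeats 4000000 in
/-- For a smooth field `G` of symmetric positive definite `2×2` matrices on an open
`U ⊆ ℝ²` and `φ = √(det G)`, one has the identity
`Σᵢⱼ (G⁻¹)ᵢⱼ ΔGᵢⱼ = 2φ⁻¹Δφ − 2φ⁻²‖∇φ‖² + Σᵢⱼₖₗ (G⁻¹)ᵢₖ(G⁻¹)ⱼₗ⟨∇Gᵢⱼ, ∇Gₖₗ⟩`. -/
theorem stmt12 (U : Set (ℝ × ℝ)) (hU : IsOpen U)
    (G : ℝ × ℝ → Matrix (Fin 2) (Fin 2) ℝ)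
    (hsmooth : ∀ i j : Fin 2, ContDiffOn ℝ (⊤ : ℕ∞) (fun p => G p i j) U)
    (hsymm : ∀ p ∈ U, (G p).IsSymm)
    (hpos : ∀ p ∈ U, (G p).PosDef) :
    ∀ p ∈ U,
      (∑ i : Fin 2, ∑ j : Fin 2, (G p)⁻¹ i j * lap (fun q => G q i j) p)
        = 2 * (Real.sqrt (det (G p)))⁻¹ * lap (fun q => Real.sqrt (det (G q))) p
          - 2 * ((Real.sqrt (det (G p)))⁻¹) ^ 2 *
            ((pdX (fun q => Real.sqrt (det (G q))) p) ^ 2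
              + (pdY (fun q => Real.sqrt (det (G q))) p) ^ 2)
          + ∑ i : Fin 2, ∑ j : Fin 2, ∑ k : Fin 2, ∑ l : Fin 2,
              (G p)⁻¹ i k * (G p)⁻¹ j l *
                gradInner (fun q => G q i j) (fun q => G q k l) p := by
  intro p hp
  obtain ⟨x, y⟩ := p
  set sX : Set ℝ := {t | (t, y) ∈ U} with hsXdef
  set sY : Set ℝ := {t | (x, t) ∈ U} with hsYdef
  have hsX : IsOpen sX := hU.preimage (continuous_id.prodMk continuous_const)
  have hsY : IsOpen sY := hU.preimage (continuous_const.prodMk continuous_id)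
  have hxX : x ∈ sX := hp
  have hyY : y ∈ sY := hp
  have hGX : ∀ i j : Fin 2, ContDiffOn ℝ 2 (fun t => G (t, y) i j) sX := fun i j =>
    ((hsmooth i j).of_le (WithTop.coe_le_coe.mpr le_top)).comp
      (contDiff_id.prodMk contDiff_const).contDiffOn (fun t ht => ht)
  have hGY : ∀ i j : Fin 2, ContDiffOn ℝ 2 (fun t => G (x, t) i j) sY := fun i j =>
    ((hsmooth i j).of_le (WithTop.coe_le_coe.mpr le_top)).comp
      (contDiff_const.prodMk contDiff_id).contDiffOn (fun t ht => ht)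
  have hdposq : ∀ q ∈ U, 0 < det (G q) := fun q hq => (hpos q hq).det_pos
  set r := Real.sqrt (det (G (x, y))) with hrdef
  have hdpos : 0 < det (G (x, y)) := hdposq _ hp
  have hr : 0 < r := Real.sqrt_pos.2 hdpos
  have hr2 : det (G (x, y)) = r ^ 2 := (Real.sq_sqrt hdpos.le).symm
  have hrDX : G (x, y) 0 0 * G (x, y) 1 1 - G (x, y) 0 1 * G (x, y) 1 0 = r ^ 2 := by
    rw [← Matrix.det_fin_two]; exact hr2
  -- positivity of top-left entry
  have ha : 0 < G (x, y) 0 0 := by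
    have h1 : (Pi.single 0 1 : Fin 2 → ℝ) ≠ 0 := by
      intro h; have := congrFun h 0; simp at this
    exact (hpos _ hp).diag_pos
  -- symmetry facts
  have hb : G (x, y) 1 0 = G (x, y) 0 1 := (hsymm _ hp).apply 0 1
  have hbXeq : Set.EqOn (fun t => G (t, y) 1 0) (fun t => G (t, y) 0 1) sX :=
    fun t ht => (hsymm _ ht).apply 0 1
  have hbYeq : Set.EqOn (fun t => G (x, t) 1 0) (fun t => G (x, t) 0 1) sY :=
    fun t ht => (hsymm _ ht).apply 0 1
  have hbX1 : deriv (fun t => G (t, y) 1 0) x = deriv (fun t => G (t, y) 0 1) x :=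
    (Filter.eventuallyEq_of_mem (hsX.mem_nhds hxX) hbXeq).deriv_eq
  have hbY1 : deriv (fun t => G (x, t) 1 0) y = deriv (fun t => G (x, t) 0 1) y :=
    (Filter.eventuallyEq_of_mem (hsY.mem_nhds hyY) hbYeq).deriv_eq
  have hbX2 : deriv (deriv (fun t => G (t, y) 1 0)) x
      = deriv (deriv (fun t => G (t, y) 0 1)) x := by
    have h : Set.EqOn (deriv (fun t => G (t, y) 1 0)) (deriv (fun t => G (t, y) 0 1)) sX :=
      fun t ht => (Filter.eventuallyEq_of_mem (hsX.mem_nhds ht) hbXeq).deriv_eq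
    exact (Filter.eventuallyEq_of_mem (hsX.mem_nhds hxX) h).deriv_eq
  have hbY2 : deriv (deriv (fun t => G (x, t) 1 0)) y
      = deriv (deriv (fun t => G (x, t) 0 1)) y := by
    have h : Set.EqOn (deriv (fun t => G (x, t) 1 0)) (deriv (fun t => G (x, t) 0 1)) sY :=
      fun t ht => (Filter.eventuallyEq_of_mem (hsY.mem_nhds ht) hbYeq).deriv_eq
    exact (Filter.eventuallyEq_of_mem (hsY.mem_nhds hyY) h).deriv_eq
  -- determinant slices
  have hDXpos : ∀ t ∈ sX,
      0 < G (t, y) 0 0 * G (t, y) 1 1 - G (t, y) 0 1 * G (t, y) 1 0 := by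
    intro t ht
    have := hdposq (t, y) ht
    rwa [Matrix.det_fin_two] at this
  have hDYpos : ∀ t ∈ sY,
      0 < G (x, t) 0 0 * G (x, t) 1 1 - G (x, t) 0 1 * G (x, t) 1 0 := by
    intro t ht
    have := hdposq (x, t) ht
    rwa [Matrix.det_fin_two] at this
  have hDX : ContDiffOn ℝ 2
      (fun t => G (t, y) 0 0 * G (t, y) 1 1 - G (t, y) 0 1 * G (t, y) 1 0) sX :=
    ((hGX 0 0).mul (hGX 1 1)).sub ((hGX 0 1).mul (hGX 1 0))
  have hDY : ContDiffOn ℝ 2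
      (fun t => G (x, t) 0 0 * G (x, t) 1 1 - G (x, t) 0 1 * G (x, t) 1 0) sY :=
    ((hGY 0 0).mul (hGY 1 1)).sub ((hGY 0 1).mul (hGY 1 0))
  have hφX : (fun t => Real.sqrt (det (G (t, y))))
      = fun t => Real.sqrt (G (t, y) 0 0 * G (t, y) 1 1 - G (t, y) 0 1 * G (t, y) 1 0) := by
    funext t; rw [Matrix.det_fin_two]
  have hφY : (fun t => Real.sqrt (det (G (x, t))))
      = fun t => Real.sqrt (G (x, t) 0 0 * G (x, t) 1 1 - G (x, t) 0 1 * G (x, t) 1 0) := by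
    funext t; rw [Matrix.det_fin_two]
  -- derivative values
  have hpX1 : deriv (fun t =>
        Real.sqrt (G (t, y) 0 0 * G (t, y) 1 1 - G (t, y) 0 1 * G (t, y) 1 0)) x
      = deriv (fun t => G (t, y) 0 0 * G (t, y) 1 1 - G (t, y) 0 1 * G (t, y) 1 0) x
          / (2 * r) :=
    sqrt_deriv1 hsX hDX hDXpos hxX hr hrDX
  have hpY1 : deriv (fun t =>
        Real.sqrt (G (x, t) 0 0 * G (x, t) 1 1 - G (x, t) 0 1 * G (x, t) 1 0)) y
      = deriv (fun t => G (x, t) 0 0 * G (x, t) 1 1 - G (x, t) 0 1 * G (x, t) 1 0) y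
          / (2 * r) :=
    sqrt_deriv1 hsY hDY hDYpos hyY hr hrDX
  have hpX2 : deriv (deriv (fun t =>
        Real.sqrt (G (t, y) 0 0 * G (t, y) 1 1 - G (t, y) 0 1 * G (t, y) 1 0))) x
      = deriv (deriv (fun t => G (t, y) 0 0 * G (t, y) 1 1 - G (t, y) 0 1 * G (t, y) 1 0)) x
          / (2 * r)
        - (deriv (fun t => G (t, y) 0 0 * G (t, y) 1 1 - G (t, y) 0 1 * G (t, y) 1 0) x) ^ 2
          / (4 * r ^ 3) :=
    sqrt_deriv2 hsX hDX hDXpos hxX hr hrDX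
  have hpY2 : deriv (deriv (fun t =>
        Real.sqrt (G (x, t) 0 0 * G (x, t) 1 1 - G (x, t) 0 1 * G (x, t) 1 0))) y
      = deriv (deriv (fun t => G (x, t) 0 0 * G (x, t) 1 1 - G (x, t) 0 1 * G (x, t) 1 0)) y
          / (2 * r)
        - (deriv (fun t => G (x, t) 0 0 * G (x, t) 1 1 - G (x, t) 0 1 * G (x, t) 1 0) y) ^ 2
          / (4 * r ^ 3) :=
    sqrt_deriv2 hsY hDY hDYpos hyY hr hrDX
  have hdX1 : deriv (fun t => G (t, y) 0 0 * G (t, y) 1 1 - G (t, y) 0 1 * G (t, y) 1 0) x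
      = deriv (fun t => G (t, y) 0 0) x * G (x, y) 1 1
          + G (x, y) 0 0 * deriv (fun t => G (t, y) 1 1) x
        - (deriv (fun t => G (t, y) 0 1) x * G (x, y) 1 0
            + G (x, y) 0 1 * deriv (fun t => G (t, y) 1 0) x) :=
    prod_deriv1 hsX (hGX 0 0) (hGX 0 1) (hGX 1 0) (hGX 1 1) hxX
  have hdY1 : deriv (fun t => G (x, t) 0 0 * G (x, t) 1 1 - G (x, t) 0 1 * G (x, t) 1 0) y
      = deriv (fun t => G (x, t) 0 0) y * G (x, y) 1 1
          + G (x, y) 0 0 * deriv (fun t => G (x, t) 1 1) y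
        - (deriv (fun t => G (x, t) 0 1) y * G (x, y) 1 0
            + G (x, y) 0 1 * deriv (fun t => G (x, t) 1 0) y) :=
    prod_deriv1 hsY (hGY 0 0) (hGY 0 1) (hGY 1 0) (hGY 1 1) hyY
  have hdX2 : deriv (deriv
        (fun t => G (t, y) 0 0 * G (t, y) 1 1 - G (t, y) 0 1 * G (t, y) 1 0)) x
      = deriv (deriv (fun t => G (t, y) 0 0)) x * G (x, y) 1 1
          + 2 * deriv (fun t => G (t, y) 0 0) x * deriv (fun t => G (t, y) 1 1) x
          + G (x, y) 0 0 * deriv (deriv (fun t => G (t, y) 1 1)) x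
        - (deriv (deriv (fun t => G (t, y) 0 1)) x * G (x, y) 1 0
            + 2 * deriv (fun t => G (t, y) 0 1) x * deriv (fun t => G (t, y) 1 0) x
            + G (x, y) 0 1 * deriv (deriv (fun t => G (t, y) 1 0)) x) :=
    prod_deriv2 hsX (hGX 0 0) (hGX 0 1) (hGX 1 0) (hGX 1 1) hxX
  have hdY2 : deriv (deriv
        (fun t => G (x, t) 0 0 * G (x, t) 1 1 - G (x, t) 0 1 * G (x, t) 1 0)) y
      = deriv (deriv (fun t => G (x, t) 0 0)) y * G (x, y) 1 1
          + 2 * deriv (fun t => G (x, t) 0 0) y * deriv (fun t => G (x, t) 1 1) y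
          + G (x, y) 0 0 * deriv (deriv (fun t => G (x, t) 1 1)) y
        - (deriv (deriv (fun t => G (x, t) 0 1)) y * G (x, y) 1 0
            + 2 * deriv (fun t => G (x, t) 0 1) y * deriv (fun t => G (x, t) 1 0) y
            + G (x, y) 0 1 * deriv (deriv (fun t => G (x, t) 1 0)) y) :=
    prod_deriv2 hsY (hGY 0 0) (hGY 0 1) (hGY 1 0) (hGY 1 1) hyY
  -- inverse entries
  have hinv : (G (x, y))⁻¹
      = (r ^ 2)⁻¹ • !![G (x, y) 1 1, -(G (x, y) 0 1); -(G (x, y) 1 0), G (x, y) 0 0] := by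
    rw [Matrix.inv_def, Ring.inverse_eq_inv', Matrix.adjugate_fin_two, hr2]
  have hinv00 : (G (x, y))⁻¹ 0 0 = (r ^ 2)⁻¹ * G (x, y) 1 1 := by rw [hinv]; simp
  have hinv01 : (G (x, y))⁻¹ 0 1 = (r ^ 2)⁻¹ * -(G (x, y) 0 1) := by rw [hinv]; simp
  have hinv10 : (G (x, y))⁻¹ 1 0 = (r ^ 2)⁻¹ * -(G (x, y) 1 0) := by rw [hinv]; simp
  have hinv11 : (G (x, y))⁻¹ 1 1 = (r ^ 2)⁻¹ * G (x, y) 0 0 := by rw [hinv]; simp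
  -- substitute for the bottom-right entry
  have hc : G (x, y) 1 1 = (r ^ 2 + G (x, y) 0 1 * G (x, y) 0 1) / G (x, y) 0 0 := by
    rw [hb] at hrDX
    field_simp
    linear_combination hrDX
  simp only [Fin.sum_univ_two, lap, gradInner, pdX, pdY]
  rw [hφX, hφY]
  rw [hinv00, hinv01, hinv10, hinv11, hpX2, hpY2, hpX1, hpY1, hdX2, hdY2, hdX1, hdY1,
    hb, hbX1, hbY1, hbX2, hbY2, hc]
  have hane : G (x, y) 0 0 ≠ 0 := ha.ne'
  have hrne : r ≠ 0 := hr.ne'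
  field_simp
  ring
end
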